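/- Let f : X → ℝ ∪ {+∞} be a proper convex function on a locally convex space X, continuous at a point x, and let ℓ ≥ 0. Then the ε-subdifferential ∂_ℓ f(x) is nonempty, convex, weak*-compact, and its support function satisfies σ_{∂_ℓ f(x)}(u) = inf_{λ>0} (f(x + λu) − f(x) + ℓ)/λ for every u ∈ X. -/

import Mathlib

/-!
Write `r = f x` and let `K` be the real epigraph of `f`. The difference quotient
`(f (x + t • u) - r + ℓ) / t` is the slope at which the ray from `(x, r - ℓ)` in direction `u`
meets `K` at time `t`; call `Q u` the set of these slopes. Convexity of `K` gives
`Q u + Q v ⊆ Q (u + v)`, and `Q (c • u) = c • Q u` for `c > 0`, so `G u = inf Q u` is sublinear.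
It is finite: `Q u` is nonempty because `f` is bounded above near `x`, and bounded below because
`Q u + Q (-u) ⊆ Q 0 ⊆ [0, ∞)`, the point `(x, r - ℓ)` lying below `K` as `ℓ ≥ 0`.
Then `∂_ℓ f(x)` is the set of linear `p ≤ G`, all continuous since `G` is bounded above near `0`.
Hahn–Banach on the line through `u` gives such a `p` with `p u = G u`, whence nonemptiness and the
support formula; compactness is Tychonoff's theorem, the set being closed in `∏ᵤ [-G (-u), G u]`.
-/

open Set
noncomputable section

variable {X : Type*} [AddCommGroup X] [Module ℝ X] [TopologicalSpace X]

/-- The `ℓ`-subdifferential of `f : X → ℝ ∪ {+∞}` at `x`, as a subset of the dual `X*`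
endowed with its weak* topology:
`∂_ℓ f(x) = {x* : ⟨x*, y − x⟩ ≤ f(y) − f(x) + ℓ for all y}`. -/
def epsSubdiff (f : X → EReal) (x : X) (l : ℝ) : Set (WeakDual ℝ X) :=
  {p | ∀ y : X, ((p y : EReal) - (p x : EReal)) ≤ f y - f x + (l : EReal)}

open Filter Topology Pointwise

section Sublinear

variable {E : Type*} [AddCommGroup E] [Module ℝ E]

structure IsSublinear (G : E → ℝ) : Prop where
  map_smul_of_pos : ∀ c : ℝ, 0 < c → ∀ u, G (c • u) = c * G u
  map_add_le : ∀ u v, G (u + v) ≤ G u + G v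

namespace IsSublinear

variable {G : E → ℝ}

theorem map_zero (hG : IsSublinear G) : G 0 = 0 := by
  have h := hG.map_smul_of_pos 2 two_pos 0
  rw [smul_zero] at h
  linarith

theorem mul_le_map_smul (hG : IsSublinear G) (c : ℝ) (u : E) : c * G u ≤ G (c • u) := by
  rcases lt_trichotomy c 0 with hc | rfl | hc
  · have h := hG.map_add_le (c • u) ((-c) • u)
    rw [← add_smul, add_neg_cancel, zero_smul, hG.map_zero,
      hG.map_smul_of_pos (-c) (neg_pos.2 hc)] at h
    linarith
  · simp [hG.map_zero]
  · exact (hG.map_smul_of_pos c hc u).ge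

theorem exists_linearMap_le_apply_eq (hG : IsSublinear G) (u : E) :
    ∃ g : E →ₗ[ℝ] ℝ, (∀ v, g v ≤ G v) ∧ g u = G u := by
  -- `c • u ↦ c * G u` is well defined on `ℝ ∙ u`, also when `u = 0`
  have hker : ∀ c : ℝ, c • u = 0 → RingHom.id ℝ c • G u = 0 := fun c hc => by
    have h₁ := hG.mul_le_map_smul c u
    have h₂ := hG.mul_le_map_smul (-c) u
    rw [hc, hG.map_zero] at h₁
    rw [neg_smul, hc, neg_zero, hG.map_zero] at h₂
    simp only [RingHom.id_apply, smul_eq_mul]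
    linarith
  obtain ⟨g, hg_ext, hg_le⟩ := exists_extension_of_le_sublinear
    (LinearPMap.mkSpanSingleton' u (G u) hker) G hG.map_smul_of_pos hG.map_add_le <| by
      rintro ⟨_, hv⟩
      obtain ⟨c, rfl⟩ := Submodule.mem_span_singleton.1 hv
      rw [LinearPMap.mkSpanSingleton'_apply]
      exact hG.mul_le_map_smul c u
  exact ⟨g, hg_le, (hg_ext ⟨u, Submodule.mem_span_singleton_self u⟩).trans
    (LinearPMap.mkSpanSingleton'_apply_self _ _ _ _)⟩

end IsSublinear

end Sublinear

section Minorants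

variable {E : Type*} [AddCommGroup E] [Module ℝ E] [TopologicalSpace E]

def minorants (G : E → ℝ) : Set (WeakDual ℝ E) := {p | ∀ u, p u ≤ G u}

theorem convex_minorants (G : E → ℝ) : Convex ℝ (minorants G) := by
  intro p hp q hq a b ha hb hab u
  calc a * p u + b * q u ≤ a * G u + b * G u := by gcongr; exacts [hp u, hq u]
    _ = G u := by rw [← add_mul, hab, one_mul]

variable [IsTopologicalAddGroup E] [ContinuousSMul ℝ E]

theorem LinearMap.continuous_of_bddAbove_image (g : E →ₗ[ℝ] ℝ) {V : Set E} (hV : V ∈ 𝓝 0)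
    (hg : BddAbove (g '' V)) : Continuous g := by
  obtain ⟨C, hC⟩ := hg
  have hbdd : Bornology.IsVonNBounded ℝ (g '' (V ∩ -V)) := by
    rw [NormedSpace.isVonNBounded_iff]
    refine (Metric.isBounded_Icc (-C) C).subset ?_
    rintro _ ⟨v, ⟨hv, hv'⟩, rfl⟩
    have h := hC ⟨-v, hv', rfl⟩
    rw [map_neg] at h
    exact ⟨by linarith, hC ⟨v, hv, rfl⟩⟩
  exact (g.clmOfExistsBoundedImage ⟨_, inter_mem hV (neg_mem_nhds_zero E hV), hbdd⟩).continuous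

theorem LinearMap.continuous_of_le {g : E →ₗ[ℝ] ℝ} {G : E → ℝ} (hg : ∀ u, g u ≤ G u)
    {V : Set E} (hV : V ∈ 𝓝 0) (hGV : BddAbove (G '' V)) : Continuous g := by
  obtain ⟨C, hC⟩ := hGV
  refine g.continuous_of_bddAbove_image hV ⟨C, ?_⟩
  rintro _ ⟨v, hv, rfl⟩
  exact (hg v).trans (hC ⟨v, hv, rfl⟩)

theorem isCompact_minorants {G : E → ℝ} {V : Set E} (hV : V ∈ 𝓝 0) (hGV : BddAbove (G '' V)) :
    IsCompact (minorants G) := by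
  have hemb : IsEmbedding fun (p : WeakDual ℝ E) (u : E) => p u :=
    WeakBilin.isEmbedding ContinuousLinearMap.coe_injective
  have himage : (fun (p : WeakDual ℝ E) (u : E) => p u) '' minorants G =
      range ((↑) : (E →ₗ[ℝ] ℝ) → E → ℝ) ∩ {h | ∀ u, h u ≤ G u} := by
    ext h
    constructor
    · rintro ⟨p, hp, rfl⟩
      exact ⟨⟨(p : E →L[ℝ] ℝ), rfl⟩, hp⟩
    · rintro ⟨⟨g, rfl⟩, hg⟩
      exact ⟨⟨g, g.continuous_of_le hg hV hGV⟩, hg, rfl⟩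
  have hclosed : IsClosed {h : E → ℝ | ∀ u, h u ≤ G u} := by
    simp only [ofPred_forall]
    exact isClosed_iInter fun u => isClosed_le (continuous_apply u) continuous_const
  rw [hemb.isCompact_iff, himage]
  refine (isCompact_univ_pi fun u => isCompact_Icc (a := -G (-u)) (b := G u)).of_isClosed_subset
    ((LinearMap.isClosed_range_coe _ _ _).inter hclosed) ?_
  rintro _ ⟨⟨g, rfl⟩, hg⟩ u -
  have h := hg (-u)
  rw [map_neg] at h
  exact ⟨by linarith, hg u⟩

namespace IsSublinear

variable {G : E → ℝ} {V : Set E}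

theorem exists_mem_minorants_apply_eq (hG : IsSublinear G) (hV : V ∈ 𝓝 0)
    (hGV : BddAbove (G '' V)) (u : E) : ∃ p ∈ minorants G, p u = G u := by
  obtain ⟨g, hg, hgu⟩ := hG.exists_linearMap_le_apply_eq u
  exact ⟨StrongDual.toWeakDual ⟨g, g.continuous_of_le hg hV hGV⟩, hg, hgu⟩

theorem nonempty_minorants (hG : IsSublinear G) (hV : V ∈ 𝓝 0) (hGV : BddAbove (G '' V)) :
    (minorants G).Nonempty :=
  let ⟨p, hp, _⟩ := hG.exists_mem_minorants_apply_eq hV hGV 0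
  ⟨p, hp⟩

theorem iSup_minorants_apply (hG : IsSublinear G) (hV : V ∈ 𝓝 0) (hGV : BddAbove (G '' V))
    (u : E) : ⨆ p ∈ minorants G, (p u : EReal) = G u := by
  obtain ⟨p, hp, hpu⟩ := hG.exists_mem_minorants_apply_eq hV hGV u
  exact le_antisymm (iSup₂_le fun q hq => EReal.coe_le_coe (hq u))
    (le_iSup₂_of_le p hp (hpu ▸ le_rfl))

end IsSublinear

end Minorants

section SlopeSet

variable {E : Type*} [AddCommGroup E] [Module ℝ E] {K : Set (E × ℝ)} {x : E} {ρ : ℝ}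

def slopeSet (K : Set (E × ℝ)) (x : E) (ρ : ℝ) (u : E) : Set ℝ :=
  {q | ∃ t > 0, (x + t • u, ρ + t * q) ∈ K}

theorem Convex.add_slopeSet_subset (hK : Convex ℝ K) (u v : E) :
    slopeSet K x ρ u + slopeSet K x ρ v ⊆ slopeSet K x ρ (u + v) := by
  rintro _ ⟨q₁, ⟨t, ht, h₁⟩, q₂, ⟨m, hm, h₂⟩, rfl⟩
  have htm : 0 < t + m := add_pos ht hm
  refine ⟨t * m / (t + m), by positivity, ?_⟩
  convert hK h₁ h₂ (a := m / (t + m)) (b := t / (t + m)) (by positivity) (by positivity)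
    (by rw [← add_div, add_comm, div_self htm.ne']) using 1
  ext
  · simp only [Prod.smul_mk, Prod.fst_add]
    match_scalars <;> field_simp; ring
  · simp only [Prod.smul_mk, Prod.snd_add, smul_eq_mul]
    field_simp
    ring

theorem slopeSet_smul {c : ℝ} (hc : 0 < c) (u : E) :
    slopeSet K x ρ (c • u) = c • slopeSet K x ρ u := by
  ext q
  rw [mem_smul_set_iff_inv_smul_mem₀ hc.ne', smul_eq_mul]
  constructor
  · rintro ⟨t, ht, h⟩
    refine ⟨t * c, by positivity, ?_⟩
    convert h using 3
    · rw [smul_smul]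
    · field_simp
  · rintro ⟨t, ht, h⟩
    refine ⟨t / c, by positivity, ?_⟩
    convert h using 3
    · rw [smul_smul, div_mul_cancel₀ t hc.ne']
    · field_simp

theorem slopeSet_zero_subset_Ici (hbelow : ∀ y, (x, y) ∈ K → ρ ≤ y) :
    slopeSet K x ρ 0 ⊆ Ici 0 := by
  rintro q ⟨t, ht, hq⟩
  rw [smul_zero, add_zero] at hq
  exact nonneg_of_mul_nonneg_right (by linarith [hbelow _ hq]) ht

theorem Convex.bddBelow_slopeSet (hK : Convex ℝ K) (hbelow : ∀ y, (x, y) ∈ K → ρ ≤ y) {u : E}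
    (hne : (slopeSet K x ρ (-u)).Nonempty) : BddBelow (slopeSet K x ρ u) := by
  obtain ⟨q', hq'⟩ := hne
  refine ⟨-q', fun q hq => ?_⟩
  have h := hK.add_slopeSet_subset u (-u) (add_mem_add hq hq')
  rw [add_neg_cancel] at h
  have : 0 ≤ q + q' := slopeSet_zero_subset_Ici hbelow h
  linarith

theorem Convex.isSublinear_sInf_slopeSet (hK : Convex ℝ K) (hbelow : ∀ y, (x, y) ∈ K → ρ ≤ y)
    (hne : ∀ u, (slopeSet K x ρ u).Nonempty) : IsSublinear fun u => sInf (slopeSet K x ρ u) where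
  map_smul_of_pos c hc u := by
    rw [slopeSet_smul hc, Real.sInf_smul_of_nonneg hc.le, smul_eq_mul]
  map_add_le u v := by
    rw [← csInf_add (hne u) (hK.bddBelow_slopeSet hbelow (hne _)) (hne v)
      (hK.bddBelow_slopeSet hbelow (hne _))]
    exact csInf_le_csInf (hK.bddBelow_slopeSet hbelow (hne _)) ((hne u).add (hne v))
      (hK.add_slopeSet_subset u v)

theorem nonempty_slopeSet_of_mem_nhds [TopologicalSpace E] [ContinuousSMul ℝ E] {q : ℝ}
    (hV : {u | q ∈ slopeSet K x ρ u} ∈ 𝓝 0) (u : E) : (slopeSet K x ρ u).Nonempty := by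
  have hsmul : Tendsto (fun t : ℝ => t • u) (𝓝[>] 0) (𝓝 0) :=
    ((continuous_id.smul continuous_const).tendsto' 0 0 (zero_smul ℝ u)).mono_left
      nhdsWithin_le_nhds
  obtain ⟨t, htV, ht⟩ : ∃ t : ℝ, q ∈ slopeSet K x ρ (t • u) ∧ 0 < t :=
    ((hsmul.eventually hV).and (self_mem_nhdsWithin : Ioi (0 : ℝ) ∈ 𝓝[>] 0)).exists
  rw [slopeSet_smul ht, mem_smul_set_iff_inv_smul_mem₀ ht.ne'] at htV
  exact ⟨_, htV⟩

end SlopeSet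

section EpsDirDeriv

variable {E : Type*} [AddCommGroup E] [Module ℝ E] {f : E → EReal} {x : E} {l r : ℝ}

def epsDirDeriv (f : E → EReal) (x : E) (l : ℝ) (u : E) : EReal :=
  ⨅ t : Ioi (0 : ℝ), ((t.1⁻¹ : ℝ) : EReal) * (f (x + t.1 • u) - f x + l)

theorem mem_epsSubdiff_iff [TopologicalSpace E] {p : WeakDual ℝ E} :
    p ∈ epsSubdiff f x l ↔ ∀ u, (p u : EReal) ≤ epsDirDeriv f x l u := by
  constructor
  · intro hp u
    refine le_iInf fun t => ?_
    have h := hp (x + t.1 • u)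
    rw [← EReal.coe_sub, map_add, map_smul, add_sub_cancel_left, smul_eq_mul] at h
    calc (p u : EReal) = ((t.1⁻¹ : ℝ) : EReal) * ((t.1 * p u : ℝ) : EReal) := by
          rw [← EReal.coe_mul, inv_mul_cancel_left₀ t.2.ne']
      _ ≤ _ := mul_le_mul_of_nonneg_left h (by exact_mod_cast (inv_pos.2 t.2).le)
  · intro hp y
    calc (p y : EReal) - p x = p (y - x) := by rw [map_sub, EReal.coe_sub]
      _ ≤ epsDirDeriv f x l (y - x) := hp _
      _ ≤ ((1⁻¹ : ℝ) : EReal) * (f (x + (1 : ℝ) • (y - x)) - f x + l) :=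
          iInf_le _ (⟨1, mem_Ioi.2 one_pos⟩ : Ioi (0 : ℝ))
      _ = f y - f x + l := by simp

theorem epsDirDeriv_eq_sInf_slopeSet (hproper : ∀ y, f y ≠ ⊥) (hr : f x = r) {u : E}
    (hne : (slopeSet {p | f p.1 ≤ p.2} x (r - l) u).Nonempty)
    (hbdd : BddBelow (slopeSet {p | f p.1 ≤ p.2} x (r - l) u)) :
    epsDirDeriv f x l u = sInf (slopeSet {p | f p.1 ≤ p.2} x (r - l) u) := by
  have quotient_coe : ∀ {t : ℝ}, 0 < t → ∀ a : ℝ,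
      ((t⁻¹ : ℝ) : EReal) * ((a : EReal) - r + l) = (((a - (r - l)) / t : ℝ) : EReal) := by
    intro t ht a
    norm_cast
    field_simp
    ring
  rw [EReal.coe_strictMono.monotone.map_csInf_of_continuousAt
    continuous_coe_real_ereal.continuousAt hne hbdd, sInf_image]
  apply le_antisymm
  · refine le_iInf₂ fun q ⟨t, ht, hq⟩ => (iInf_le _ (⟨t, ht⟩ : Ioi (0 : ℝ))).trans ?_
    rw [hr]
    calc ((t⁻¹ : ℝ) : EReal) * (f (x + t • u) - r + l)
        ≤ ((t⁻¹ : ℝ) : EReal) * (((r - l + t * q : ℝ) : EReal) - r + l) := by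
          refine mul_le_mul_of_nonneg_left ?_ (by exact_mod_cast (inv_pos.2 ht).le)
          exact add_le_add_left (EReal.sub_le_sub hq le_rfl) _
      _ = q := by rw [quotient_coe ht]; congr 1; field_simp; ring
  · refine le_iInf fun t => ?_
    rw [hr]
    induction h : f (x + t.1 • u) using EReal.rec with
    | bot => exact absurd h (hproper _)
    | top => simp [EReal.coe_mul_top_of_pos (inv_pos.2 t.2)]
    | coe a =>
      rw [quotient_coe t.2]
      refine iInf₂_le _ ⟨t.1, t.2, ?_⟩
      rw [mul_div_cancel₀ _ t.2.ne', add_sub_cancel]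
      exact h.le

theorem epsSubdiff_eq_minorants [TopologicalSpace E] (hproper : ∀ y, f y ≠ ⊥) (hr : f x = r)
    (hne : ∀ u, (slopeSet {p | f p.1 ≤ p.2} x (r - l) u).Nonempty)
    (hbdd : ∀ u, BddBelow (slopeSet {p | f p.1 ≤ p.2} x (r - l) u)) :
    epsSubdiff f x l = minorants fun u => sInf (slopeSet {p | f p.1 ≤ p.2} x (r - l) u) := by
  ext p
  simp only [mem_epsSubdiff_iff, epsDirDeriv_eq_sInf_slopeSet hproper hr (hne _) (hbdd _),
    EReal.coe_le_coe_iff]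
  rfl

theorem ContinuousAt.one_add_mem_slopeSet_epigraph [TopologicalSpace E] [ContinuousAdd E]
    (hcont : ContinuousAt f x) (hr : f x = r) :
    {u | 1 + l ∈ slopeSet {p | f p.1 ≤ p.2} x (r - l) u} ∈ 𝓝 0 := by
  have hlt : ∀ᶠ u in 𝓝 (0 : E), f (x + u) < (r + 1 : ℝ) := by
    refine (hcont.comp_of_eq (continuous_const_add x).continuousAt (add_zero x))
      |>.eventually_lt_const ?_
    rw [Function.comp_apply, add_zero, hr]
    exact EReal.coe_lt_coe_iff.2 (lt_add_one r)
  filter_upwards [hlt] with u hu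
  exact ⟨1, one_pos, by simpa [add_sub_cancel] using hu.le⟩

end EpsDirDeriv

theorem epsSubdiff_nonempty_convex_isCompact_and_support_general
    [IsTopologicalAddGroup X] [ContinuousSMul ℝ X]
    (f : X → EReal) (x : X) (l : ℝ) (hl : 0 ≤ l)
    (hproper : ∀ y : X, f y ≠ ⊥)
    (hconv : Convex ℝ {p : X × ℝ | f p.1 ≤ (p.2 : EReal)})
    (hfin : f x ≠ ⊤) (hcont : ContinuousAt f x) :
    (epsSubdiff f x l).Nonempty ∧
    Convex ℝ (epsSubdiff f x l) ∧
    IsCompact (epsSubdiff f x l) ∧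
    (∀ u : X, (⨆ p ∈ epsSubdiff f x l, (p u : EReal)) =
      ⨅ lam : Ioi (0 : ℝ), (((lam.1)⁻¹ : ℝ) : EReal) * (f (x + lam.1 • u) - f x + (l : EReal))) := by
  obtain ⟨r, hr⟩ : ∃ r : ℝ, f x = r := ⟨(f x).toReal, (EReal.coe_toReal hfin (hproper x)).symm⟩
  set Q := slopeSet {p : X × ℝ | f p.1 ≤ (p.2 : EReal)} x (r - l)
  have hbelow : ∀ y, (x, y) ∈ {p : X × ℝ | f p.1 ≤ (p.2 : EReal)} → r - l ≤ y := fun y hy => by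
    have : r ≤ y := EReal.coe_le_coe_iff.1 (hr ▸ hy)
    linarith
  have hV : {u | 1 + l ∈ Q u} ∈ 𝓝 (0 : X) := hcont.one_add_mem_slopeSet_epigraph hr
  have hne : ∀ u, (Q u).Nonempty := nonempty_slopeSet_of_mem_nhds hV
  have hbdd : ∀ u, BddBelow (Q u) := fun u => hconv.bddBelow_slopeSet hbelow (hne _)
  have hG := hconv.isSublinear_sInf_slopeSet hbelow hne
  have hGV : BddAbove ((fun u => sInf (Q u)) '' {u | 1 + l ∈ Q u}) :=
    ⟨1 + l, by rintro _ ⟨u, hu, rfl⟩; exact csInf_le (hbdd u) hu⟩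
  rw [epsSubdiff_eq_minorants hproper hr hne hbdd]
  exact ⟨hG.nonempty_minorants hV hGV, convex_minorants _, isCompact_minorants hV hGV,
    fun u => (hG.iSup_minorants_apply hV hGV u).trans
      (epsDirDeriv_eq_sInf_slopeSet hproper hr (hne u) (hbdd u)).symm⟩

/-- If `f` is a proper convex function on a locally convex space, continuous (and finite) at
`x`, and `ℓ ≥ 0`, then `∂_ℓ f(x)` is nonempty, convex and weak*-compact, and its support
function is given by `σ_{∂_ℓ f(x)}(u) = inf_{λ>0} (f(x+λu) − f(x) + ℓ)/λ`. -/
theorem epsSubdiff_nonempty_convex_isCompact_and_support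
    [IsTopologicalAddGroup X] [ContinuousSMul ℝ X] [LocallyConvexSpace ℝ X]
    (f : X → EReal) (x : X) (l : ℝ) (hl : 0 ≤ l)
    (hproper : ∀ y : X, f y ≠ ⊥)
    (hconv : Convex ℝ {p : X × ℝ | f p.1 ≤ (p.2 : EReal)})
    (hfin : f x ≠ ⊤) (hcont : ContinuousAt f x) :
    (epsSubdiff f x l).Nonempty ∧
    Convex ℝ (epsSubdiff f x l) ∧
    IsCompact (epsSubdiff f x l) ∧
    (∀ u : X, (⨆ p ∈ epsSubdiff f x l, (p u : EReal)) =
      ⨅ lam : Ioi (0 : ℝ), (((lam.1)⁻¹ : ℝ) : EReal) * (f (x + lam.1 • u) - f x + (l : EReal))) :=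
  epsSubdiff_nonempty_convex_isCompact_and_support_general f x l hl hproper hconv hfin hcont
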